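/- Continuity of the split control state in the splitting parameter: Let P_A be a probability distribution with full support on a finite totally ordered set 𝒜, let |Ω⟩^{A''A'} = Σ_a √(P_A(a)) |a⟩^{A''}|ζ_a⟩^{A'}, and for θ ∈ [0,1] let U_split(θ)^{A''→A''₀A''₁} be the isometry mapping √(P_A(a))|a⟩ to Σ_{(u,v)∈f^{−1}(a)} √(P_U^θ(u) P_V^θ(v)) |u⟩^{A''₀}|v⟩^{A''₁}, where (P_U^θ, P_V^θ, f) is the explicit classical split of P_A. Let |Ω'(θ)⟩^{A''₀A''₁BE} be the state obtained by applying the Stinespring dilation U_N^{A'→BE} of a channel to U_split(θ)|Ω⟩. Then there is a constant C (depending only on P_A) such that for all θ, θ' ∈ [0,1] with |θ − θ'| ≤ δ, the purified distance satisfies P(Ω'(θ), Ω'(θ')) ≤ C√δ. -/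

import Mathlib

noncomputable section
open scoped BigOperators
open MeasureTheory Kronecker Matrix
open scoped ComplexOrder
attribute [local instance] Classical.propDecidable

namespace QIT

variable {ι κ : Type*}

/-- A measurable-space structure on matrices, coming from the product σ-algebra. -/
instance matMeasurableSpace (m n : Type*) : MeasurableSpace (Matrix m n ℂ) :=
  (inferInstance : MeasurableSpace (m → n → ℂ))

/-- Unit vector predicate. -/
def UnitVec {ι : Type*} [Fintype ι] (v : ι → ℂ) : Prop :=
  ∑ i, Complex.normSq (v i) = 1

/-- The pure state (rank-one projector) associated to a vector. -/
def pureState {ι : Type*} (v : ι → ℂ) : Matrix ι ι ℂ :=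
  Matrix.vecMulVec v (star v)

/-- Schatten 1-norm (trace norm) of a complex square matrix, via singular values. -/
def traceNorm [Fintype ι] [DecidableEq ι] (M : Matrix ι ι ℂ) : ℝ :=
  ∑ i, Real.sqrt ((Matrix.isHermitian_conjTranspose_mul_self M).eigenvalues i)

/-- Square root of a positive semidefinite matrix (junk value `0` otherwise). -/
def psqrt [Fintype ι] [DecidableEq ι] (M : Matrix ι ι ℂ) : Matrix ι ι ℂ :=
  if h : M.PosSemidef then
    (h.1.eigenvectorUnitary : Matrix ι ι ℂ) *
      Matrix.diagonal ((↑) ∘ (Real.sqrt ·) ∘ h.1.eigenvalues) *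
      (star h.1.eigenvectorUnitary : Matrix ι ι ℂ)
  else 0

/-- Generalised fidelity of two (sub)normalised states. -/
def gFid [Fintype ι] [DecidableEq ι] (ρ σ : Matrix ι ι ℂ) : ℝ :=
  traceNorm (psqrt ρ * psqrt σ) +
    Real.sqrt ((1 - ρ.trace.re) * (1 - σ.trace.re))

/-- Purified distance. -/
def pDist [Fintype ι] [DecidableEq ι] (ρ σ : Matrix ι ι ℂ) : ℝ :=
  Real.sqrt (1 - gFid ρ σ ^ 2)

/-- Purified distance between two pure states given by vectors. -/
def pureDist {ι : Type*} [Fintype ι] (v w : ι → ℂ) : ℝ :=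
  Real.sqrt (1 - ‖∑ i, (starRingEnd ℂ) (v i) * w i‖ ^ 2)

/-- Subnormalised density operator. -/
def IsSubState [Fintype ι] (ρ : Matrix ι ι ℂ) : Prop :=
  ρ.PosSemidef ∧ ρ.trace.re ≤ 1

/-- Normalised density operator. -/
def IsState [Fintype ι] (ρ : Matrix ι ι ℂ) : Prop :=
  ρ.PosSemidef ∧ ρ.trace = 1

/-- ε-smooth conditional min-entropy `H_min^ε(A|B)_ρ` of a bipartite (sub)state,
conditioning on the second tensor factor.  Logarithms are base 2. -/
def Hmin {α β : Type*} [Fintype α] [DecidableEq α] [Fintype β] [DecidableEq β]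
    (ε : ℝ) (ρ : Matrix (α × β) (α × β) ℂ) : ℝ :=
  - Real.logb 2 (sInf {t : ℝ | ∃ ρ' : Matrix (α × β) (α × β) ℂ, ∃ σ : Matrix β β ℂ,
      IsSubState ρ' ∧ pDist ρ' ρ ≤ ε ∧ σ.PosSemidef ∧
      ((1 : Matrix α α ℂ) ⊗ₖ σ - ρ').PosSemidef ∧ t = σ.trace.re})

/-- Unconditional smooth min-entropy (one-dimensional conditioning system). -/
def Hmin0 {α : Type*} [Fintype α] [DecidableEq α] (ε : ℝ) (ρ : Matrix α α ℂ) : ℝ :=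
  Hmin ε (ρ.submatrix (fun p : α × Unit => p.1) (fun p : α × Unit => p.1))

/-- Canonical purification vector of a matrix (meaningful for PSD matrices). -/
def purifyVec [Fintype ι] [DecidableEq ι] (ρ : Matrix ι ι ℂ) : ι × ι → ℂ :=
  fun p => psqrt ρ p.1 p.2

/-- Reduced density matrix of a pure state `v` on a system relabelled by `f : kept × traced → full`. -/
def marg {F K T : Type*} [Fintype T] (f : K × T → F) (v : F → ℂ) : Matrix K K ℂ :=
  Matrix.of fun k k' => ∑ t, v (f (k, t)) * (starRingEnd ℂ) (v (f (k', t)))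

/-- Reduced density matrix of a mixed state `M` under the relabelling `f : kept × traced → full`. -/
def margM {F K T : Type*} [Fintype T] (f : K × T → F) (M : Matrix F F ℂ) : Matrix K K ℂ :=
  Matrix.of fun k k' => ∑ t, M (f (k, t)) (f (k', t))

/-- Partial trace over the first tensor factor. -/
def ptraceFst {T K : Type*} [Fintype T] (M : Matrix (T × K) (T × K) ℂ) : Matrix K K ℂ :=
  Matrix.of fun k k' => ∑ t, M (t, k) (t, k')

/-- Partial trace over the second tensor factor. -/
def ptraceSnd {K T : Type*} [Fintype T] (M : Matrix (K × T) (K × T) ℂ) : Matrix K K ℂ :=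
  Matrix.of fun k k' => ∑ t, M (k, t) (k', t)

/-- ε-smooth max-entropy `H_max^ε(A)_ρ := −H_min^ε(A|E)` of (a purification of) `ρ`. -/
def Hmax {α : Type*} [Fintype α] [DecidableEq α] (ε : ℝ) (ρ : Matrix α α ℂ) : ℝ :=
  - Hmin ε (pureState (purifyVec ρ))

/-- ε-smooth coherent min-information `I_min^ε(A>B)_ρ := H_min^ε(A|E)` evaluated on
(the A,E marginal of) a purification of `ρ^{AB}`. -/
def Imin {α β : Type*} [Fintype α] [DecidableEq α] [Fintype β] [DecidableEq β]
    (ε : ℝ) (ρ : Matrix (α × β) (α × β) ℂ) : ℝ :=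
  Hmin ε (marg (fun q : (α × (α × β)) × β => ((q.1.1, q.2), q.1.2)) (purifyVec ρ))

/-- Frobenius (Schatten 2-) norm. -/
def frobNorm {ι : Type*} [Fintype ι] (M : Matrix ι ι ℂ) : ℝ :=
  Real.sqrt (∑ i, ∑ j, ‖M i j‖ ^ 2)

/-- Real power of a Hermitian matrix through its spectral decomposition
(junk value `0` for non-Hermitian input). -/
def rpowMat [Fintype ι] [DecidableEq ι] (σ : Matrix ι ι ℂ) (r : ℝ) : Matrix ι ι ℂ :=
  if h : σ.IsHermitian then
    (h.eigenvectorUnitary : Matrix ι ι ℂ) *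
      Matrix.diagonal (fun i => ((h.eigenvalues i ^ r : ℝ) : ℂ)) *
      (h.eigenvectorUnitary : Matrix ι ι ℂ)ᴴ
  else 0

/-- ε-smooth sandwiched Rényi-2 conditional entropy `H₂^ε(A|B)_ρ`, conditioning on the
second factor. -/
def H2 {α β : Type*} [Fintype α] [DecidableEq α] [Fintype β] [DecidableEq β]
    (ε : ℝ) (ρ : Matrix (α × β) (α × β) ℂ) : ℝ :=
  -2 * Real.logb 2 (sInf {t : ℝ | ∃ ρ' : Matrix (α × β) (α × β) ℂ, ∃ σ : Matrix β β ℂ,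
      IsSubState ρ' ∧ pDist ρ' ρ ≤ ε ∧ σ.PosDef ∧ σ.trace = 1 ∧
      t = frobNorm (((1 : Matrix α α ℂ) ⊗ₖ rpowMat σ (-(1/4 : ℝ))) * ρ' *
        ((1 : Matrix α α ℂ) ⊗ₖ rpowMat σ (-(1/4 : ℝ))))})

/-- Unconditional smooth sandwiched Rényi-2 entropy. -/
def H20 {α : Type*} [Fintype α] [DecidableEq α] (ε : ℝ) (ρ : Matrix α α ℂ) : ℝ :=
  H2 ε (ρ.submatrix (fun p : α × Unit => p.1) (fun p : α × Unit => p.1))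

/-- `op^{X→Y}` : reinterpret a vector on `X ⊗ Y` as an operator from `X` to `Y`. -/
def opMat {X Y : Type*} (v : X × Y → ℂ) : Matrix Y X ℂ :=
  Matrix.of fun y x => v (x, y)

/-- Apply an operator on the first tensor factor of a vector. -/
def applyLeft {X Y R : Type*} [Fintype X] (M : Matrix Y X ℂ) (w : X × R → ℂ) : Y × R → ℂ :=
  fun p => ∑ x, M p.1 x * w (x, p.2)

/-- Linearity of a superoperator. -/
def IsLin (Φ : Matrix ι ι ℂ → Matrix κ κ ℂ) : Prop :=
  ∀ (c : ℂ) (M N : Matrix ι ι ℂ), Φ (c • M + N) = c • Φ M + Φ N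

/-- Tensor extension `Φ ⊗ id_R` of a superoperator, acting on the first factor. -/
def extAncilla (Φ : Matrix ι ι ℂ → Matrix κ κ ℂ) {R : Type*}
    (M : Matrix (ι × R) (ι × R) ℂ) : Matrix (κ × R) (κ × R) ℂ :=
  Matrix.of fun x y => Φ (Matrix.of fun a b => M (a, x.2) (b, y.2)) x.1 y.1

/-- Complete positivity. -/
def IsCP [Fintype ι] [Fintype κ] (Φ : Matrix ι ι ℂ → Matrix κ κ ℂ) : Prop :=
  ∀ (R : Type) [Fintype R], ∀ M : Matrix (ι × R) (ι × R) ℂ,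
    M.PosSemidef → (extAncilla Φ M).PosSemidef

/-- Trace preservation. -/
def IsTP [Fintype ι] [Fintype κ] (Φ : Matrix ι ι ℂ → Matrix κ κ ℂ) : Prop :=
  ∀ M : Matrix ι ι ℂ, (Φ M).trace = M.trace

/-- Quantum channel: linear, completely positive, trace preserving. -/
def IsCPTP [Fintype ι] [Fintype κ] (Φ : Matrix ι ι ℂ → Matrix κ κ ℂ) : Prop :=
  IsLin Φ ∧ IsCP Φ ∧ IsTP Φ

/-- `V` is a Stinespring dilation (with environment `E`) of the superoperator `Φ`. -/
def IsStinespring {E : Type*} [Fintype ι] [DecidableEq ι] [Fintype κ] [Fintype E]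
    (Φ : Matrix ι ι ℂ → Matrix κ κ ℂ) (V : Matrix (κ × E) ι ℂ) : Prop :=
  Vᴴ * V = 1 ∧ ∀ M : Matrix ι ι ℂ, Φ M = ptraceSnd (V * M * Vᴴ)

/-- von Neumann entropy (base 2). -/
def vN [Fintype ι] [DecidableEq ι] (ρ : Matrix ι ι ℂ) : ℝ :=
  if h : ρ.IsHermitian then -∑ i, (h.eigenvalues i) * Real.logb 2 (h.eigenvalues i) else 0

/-- Coherent information `I(A>B)_ρ = H(B) − H(AB)` of a bipartite state. -/
def cohInfo {α β : Type*} [Fintype α] [DecidableEq α] [Fintype β] [DecidableEq β]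
    (ρ : Matrix (α × β) (α × β) ℂ) : ℝ :=
  vN (ptraceFst ρ) - vN ρ

/-- (Left- and right-) invariant probability measure on the unitary group, i.e.,
the Haar probability measure. -/
def IsHaarLike {ι : Type*} [Fintype ι] [DecidableEq ι]
    (μ : Measure ↥(Matrix.unitaryGroup ι ℂ)) : Prop :=
  (∀ V : ↥(Matrix.unitaryGroup ι ℂ), Measure.map (fun U => V * U) μ = μ) ∧
  (∀ V : ↥(Matrix.unitaryGroup ι ℂ), Measure.map (fun U => U * V) μ = μ)

/-- Maximally entangled (EPR) vector of rank `m`. -/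
def mevec (m : ℕ) : Fin m × Fin m → ℂ :=
  fun p => if p.1 = p.2 then ((1 / Real.sqrt m : ℝ) : ℂ) else 0

/-- Maximally mixed state. -/
def mms (ι : Type*) [Fintype ι] [DecidableEq ι] : Matrix ι ι ℂ :=
  ((Fintype.card ι : ℂ)⁻¹) • (1 : Matrix ι ι ℂ)

end QIT

namespace QIT

/-- Cumulative distribution function `F_P(i) = Σ_{j ≤ i} P(j)` on a finite ordered set. -/
def cdf {α : Type*} [Fintype α] [LinearOrder α] (P : α → ℝ) (i : α) : ℝ :=
  ∑ j ∈ Finset.univ.filter (fun j => j ≤ i), P j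

/-- Strict cumulative distribution function `F_P(i−1) = Σ_{j < i} P(j)`. -/
def cdfLt {α : Type*} [Fintype α] [LinearOrder α] (P : α → ℝ) (i : α) : ℝ :=
  ∑ j ∈ Finset.univ.filter (fun j => j < i), P j

/-- A probability mass function on a finite set. -/
def IsPMF {α : Type*} [Fintype α] (P : α → ℝ) : Prop :=
  (∀ i, 0 ≤ P i) ∧ ∑ i, P i = 1

/-- The first split distribution `P_U^θ`, the pmf with cdf `F_U^θ(i) = θ F_A(i) + 1 − θ`. -/
def splitU {α : Type*} [Fintype α] [LinearOrder α] [OrderBot α]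
    (P : α → ℝ) (θ : ℝ) (i : α) : ℝ :=
  θ * P i + (if i = ⊥ then 1 - θ else 0)

/-- The second split distribution `P_V^θ`, the pmf with cdf `F_V^θ(i) = F_A(i)/F_U^θ(i)`. -/
def splitV {α : Type*} [Fintype α] [LinearOrder α] (P : α → ℝ) (θ : ℝ) (i : α) : ℝ :=
  cdf P i / (θ * cdf P i + 1 - θ) - cdfLt P i / (θ * cdfLt P i + 1 - θ)

end QIT

/-!
The isometry `V` and the unit vectors `ζ a` drop out of the overlap of the two states, which is
the Bhattacharyya coefficient `z = ∑ √(p_θ p_θ')` of the product distributions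
`p_θ = P_U^θ ⊗ P_V^θ`. Since `1 - z² ≤ 2 (1 - z) = ∑ (√p_θ - √p_θ')² ≤ ‖p_θ - p_θ'‖₁`, it suffices
that `θ ↦ p_θ` is Lipschitz in `ℓ¹`. This is clear for `P_U^θ`, which is affine in `θ`. The
masses of `P_V^θ` are increments of `c ↦ c / (θ c + 1 - θ)` between consecutive values of `F_A`,
and this map is `1/c`-Lipschitz in `θ`; full support keeps every nonzero value of `F_A` above
`P_A(⊥)`.
-/

theorem Finset.sum_sub_filter_le_filter_lt_telescope {α : Type*} [LinearOrder α] (P : α → ℝ)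
    (s : Finset α) (G : ℝ → ℝ) :
    ∑ i ∈ s, (G (∑ j ∈ s.filter (· ≤ i), P j) - G (∑ j ∈ s.filter (· < i), P j)) =
      G (∑ j ∈ s, P j) - G 0 := by
  induction s using Finset.induction_on_max with
  | empty => simp
  | insert a s hlt ih =>
    have ha : a ∉ s := fun h => lt_irrefl a (hlt a h)
    have hle_a : (insert a s).filter (· ≤ a) = insert a s :=
      Finset.filter_true_of_mem fun j hj => by
        rcases Finset.mem_insert.1 hj with rfl | hj
        exacts [le_rfl, (hlt j hj).le]
    have hlt_a : (insert a s).filter (· < a) = s := by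
      rw [Finset.filter_insert, if_neg (lt_irrefl a), Finset.filter_true_of_mem hlt]
    have hs : ∑ i ∈ s, (G (∑ j ∈ (insert a s).filter (· ≤ i), P j) -
          G (∑ j ∈ (insert a s).filter (· < i), P j)) =
        ∑ i ∈ s, (G (∑ j ∈ s.filter (· ≤ i), P j) - G (∑ j ∈ s.filter (· < i), P j)) :=
      Finset.sum_congr rfl fun i hi => by
        rw [Finset.filter_insert, Finset.filter_insert, if_neg (hlt i hi).not_ge,
          if_neg (hlt i hi).not_gt]
    rw [Finset.sum_insert ha, hle_a, hlt_a, hs, ih, Finset.sum_insert ha]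
    ring

namespace QIT

section Pmf

variable {α β : Type*} [Fintype α] [Fintype β]

lemma IsPMF.le_one {P : α → ℝ} (hP : IsPMF P) (i : α) : P i ≤ 1 :=
  hP.2 ▸ Finset.single_le_sum (fun j _ => hP.1 j) (Finset.mem_univ i)

lemma IsPMF.mul {p : α → ℝ} {q : β → ℝ} (hp : IsPMF p) (hq : IsPMF q) :
    IsPMF fun x : α × β => p x.1 * q x.2 :=
  ⟨fun x => mul_nonneg (hp.1 x.1) (hq.1 x.2), by
    rw [Fintype.sum_prod_type, ← Finset.sum_mul_sum, hp.2, hq.2, mul_one]⟩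

lemma IsPMF.sum_abs_mul_sub_mul_le {p p' : α → ℝ} {q q' : β → ℝ} (hp' : IsPMF p')
    (hq : IsPMF q) :
    ∑ x : α × β, |p x.1 * q x.2 - p' x.1 * q' x.2| ≤
      ∑ a, |p a - p' a| + ∑ b, |q b - q' b| := by
  have hpoint : ∀ x : α × β, |p x.1 * q x.2 - p' x.1 * q' x.2| ≤
      |p x.1 - p' x.1| * q x.2 + p' x.1 * |q x.2 - q' x.2| := fun x => calc
    _ = |(p x.1 - p' x.1) * q x.2 + p' x.1 * (q x.2 - q' x.2)| := by ring_nf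
    _ ≤ _ := by
      refine (abs_add_le _ _).trans_eq ?_
      rw [abs_mul, abs_mul, abs_of_nonneg (hq.1 _), abs_of_nonneg (hp'.1 _)]
  refine (Finset.sum_le_sum fun x _ => hpoint x).trans_eq ?_
  rw [Finset.sum_add_distrib, Fintype.sum_prod_type, Fintype.sum_prod_type, Finset.sum_comm
    (f := fun a b => p' a * |q b - q' b|)]
  simp only [← Finset.mul_sum, ← Finset.sum_mul, hq.2, hp'.2, mul_one, one_mul]

lemma add_sub_two_mul_sqrt_mul_sqrt_le {a b : ℝ} (ha : 0 ≤ a) (hb : 0 ≤ b) :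
    a + b - 2 * (√a * √b) ≤ |a - b| := by
  have habs : |√a - √b| ≤ √a + √b := by
    simpa [abs_of_nonneg (Real.sqrt_nonneg _)] using abs_sub (√a) (√b)
  calc a + b - 2 * (√a * √b) = |√a - √b| * |√a - √b| := by
        rw [abs_mul_abs_self]
        linear_combination -Real.sq_sqrt ha - Real.sq_sqrt hb
    _ ≤ |√a - √b| * (√a + √b) := by gcongr
    _ = |a - b| := by
        rw [← abs_of_nonneg (by positivity : 0 ≤ √a + √b), ← abs_mul]
        congr 1
        linear_combination Real.sq_sqrt ha - Real.sq_sqrt hb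

lemma IsPMF.one_sub_sq_sum_sqrt_mul_le {p q : α → ℝ} (hp : IsPMF p) (hq : IsPMF q) :
    1 - (∑ i, √(p i) * √(q i)) ^ 2 ≤ ∑ i, |p i - q i| := by
  have h : 2 - 2 * ∑ i, √(p i) * √(q i) ≤ ∑ i, |p i - q i| := calc
    2 - 2 * ∑ i, √(p i) * √(q i) = ∑ i, (p i + q i - 2 * (√(p i) * √(q i))) := by
      rw [Finset.sum_sub_distrib, Finset.sum_add_distrib, hp.2, hq.2, ← Finset.mul_sum]
      norm_num
    _ ≤ _ := Finset.sum_le_sum fun i _ => add_sub_two_mul_sqrt_mul_sqrt_le (hp.1 i) (hq.1 i)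
  nlinarith [sq_nonneg (1 - ∑ i, √(p i) * √(q i))]

end Pmf

section Isometry

variable {A' R κ : Type*} [Fintype A'] [DecidableEq A'] [Fintype R] [Fintype κ]
  {V : Matrix R A' ℂ}

lemma UnitVec.star_mulVec_dotProduct_mulVec {ζ : A' → ℂ} (hζ : UnitVec ζ) (hV : Vᴴ * V = 1) :
    star (V *ᵥ ζ) ⬝ᵥ (V *ᵥ ζ) = 1 := by
  rw [star_mulVec, dotProduct_mulVec, vecMul_vecMul, hV, vecMul_one]
  simp only [dotProduct, Pi.star_apply, RCLike.star_def, mul_comm, Complex.mul_conj]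
  exact_mod_cast hζ

lemma sum_conj_mul_of_isometry (hV : Vᴴ * V = 1) {ζ : κ → A' → ℂ} (hζ : ∀ k, UnitVec (ζ k))
    (a b : κ → ℝ) :
    ∑ x : κ × R,
        (starRingEnd ℂ) ((a x.1 : ℂ) * (V *ᵥ ζ x.1) x.2) * ((b x.1 : ℂ) * (V *ᵥ ζ x.1) x.2) =
      ((∑ k, a k * b k : ℝ) : ℂ) := by
  rw [Fintype.sum_prod_type]
  push_cast
  refine Finset.sum_congr rfl fun k _ => ?_
  have h := (hζ k).star_mulVec_dotProduct_mulVec hV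
  simp only [dotProduct, Pi.star_apply, RCLike.star_def] at h
  calc _ = (a k : ℂ) * b k * ∑ r, (starRingEnd ℂ) ((V *ᵥ ζ k) r) * (V *ᵥ ζ k) r := by
        rw [Finset.mul_sum]
        refine Finset.sum_congr rfl fun r _ => ?_
        rw [map_mul, Complex.conj_ofReal]; ring
    _ = _ := by rw [h, mul_one]

lemma pureDist_weighted_isometry_le (hV : Vᴴ * V = 1) {ζ : κ → A' → ℂ}
    (hζ : ∀ k, UnitVec (ζ k)) {p q : κ → ℝ} (hp : IsPMF p) (hq : IsPMF q) :
    pureDist (fun x : κ × R => (√(p x.1) : ℂ) * (V *ᵥ ζ x.1) x.2)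
        (fun x : κ × R => (√(q x.1) : ℂ) * (V *ᵥ ζ x.1) x.2) ≤
      √(∑ k, |p k - q k|) := by
  rw [pureDist, sum_conj_mul_of_isometry hV hζ (fun k => √(p k)) (fun k => √(q k)),
    Complex.norm_real, Real.norm_eq_abs, sq_abs]
  exact Real.sqrt_le_sqrt (hp.one_sub_sq_sum_sqrt_mul_le hq)

end Isometry

section Cdf

variable {α : Type*} [Fintype α] [LinearOrder α] {P : α → ℝ}

lemma cdfLt_nonneg (hP : IsPMF P) (i : α) : 0 ≤ cdfLt P i :=
  Finset.sum_nonneg fun j _ => hP.1 j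

lemma cdfLt_le_cdf (hP : IsPMF P) (i : α) : cdfLt P i ≤ cdf P i :=
  Finset.sum_le_sum_of_subset_of_nonneg
    (Finset.monotone_filter_right _ fun _ _ => le_of_lt) fun j _ _ => hP.1 j

lemma cdf_le_one (hP : IsPMF P) (i : α) : cdf P i ≤ 1 :=
  hP.2 ▸ Finset.sum_le_sum_of_subset_of_nonneg (Finset.filter_subset _ _) fun j _ _ => hP.1 j

lemma sum_sub_cdf_cdfLt (G : ℝ → ℝ) :
    ∑ i, (G (cdf P i) - G (cdfLt P i)) = G (∑ i, P i) - G 0 :=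
  Finset.sum_sub_filter_le_filter_lt_telescope P Finset.univ G

end Cdf

section CdfBot

variable {α : Type*} [Fintype α] [LinearOrder α] [OrderBot α] {P : α → ℝ}

lemma cdfLt_bot : cdfLt P ⊥ = 0 := by
  simp [cdfLt]

lemma bot_le_cdf (hP : IsPMF P) (i : α) : P ⊥ ≤ cdf P i :=
  Finset.single_le_sum (fun j _ => hP.1 j) (by simp)

lemma bot_le_cdfLt (hP : IsPMF P) {i : α} (hi : i ≠ ⊥) : P ⊥ ≤ cdfLt P i :=
  Finset.single_le_sum (fun j _ => hP.1 j) (by simp [bot_lt_iff_ne_bot, hi])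

end CdfBot

/-- The map `F_A ↦ F_V^θ = F_A / F_U^θ`. -/
def cdfV (θ c : ℝ) : ℝ := c / (θ * c + 1 - θ)

lemma splitV_eq_cdfV_sub {α : Type*} [Fintype α] [LinearOrder α] (P : α → ℝ) (θ : ℝ) (i : α) :
    splitV P θ i = cdfV θ (cdf P i) - cdfV θ (cdfLt P i) := rfl

section CdfV

variable {θ θ' c : ℝ}

lemma cdfV_zero (θ : ℝ) : cdfV θ 0 = 0 := by simp [cdfV]

lemma cdfV_one (θ : ℝ) : cdfV θ 1 = 1 := by simp [cdfV]

lemma le_cdfV_denom (hθ : θ ≤ 1) (hc : c ≤ 1) : c ≤ θ * c + 1 - θ := by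
  nlinarith [mul_nonneg (sub_nonneg.2 hθ) (sub_nonneg.2 hc)]

lemma cdfV_nonneg (hθ : θ ≤ 1) (hc : 0 ≤ c) (hc1 : c ≤ 1) : 0 ≤ cdfV θ c :=
  div_nonneg hc (hc.trans (le_cdfV_denom hθ hc1))

lemma cdfV_mono {c₁ c₂ : ℝ} (hθ : θ ≤ 1) (h₁ : 0 ≤ c₁) (h₁₂ : c₁ ≤ c₂)
    (h₂ : c₂ ≤ 1) : cdfV θ c₁ ≤ cdfV θ c₂ := by
  rcases h₁.eq_or_lt with rfl | h₁
  · exact (cdfV_zero θ).trans_le (cdfV_nonneg hθ h₁₂ h₂)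
  have hd₁ := h₁.trans_le (le_cdfV_denom hθ (h₁₂.trans h₂))
  have hd₂ := (h₁.trans_le h₁₂).trans_le (le_cdfV_denom hθ h₂)
  rw [cdfV, cdfV, div_le_div_iff₀ hd₁ hd₂]
  nlinarith [mul_le_mul_of_nonneg_left h₁₂ (sub_nonneg.2 hθ)]

/-- `∂θ F_V^θ = c (1 - c) / (F_U^θ)²` and `F_U^θ ≥ c`, so the Lipschitz constant is `1 / c`. -/
lemma abs_cdfV_sub_le {m : ℝ} (hθ : θ ≤ 1) (hθ' : θ' ≤ 1) (hm : 0 < m) (hmc : m ≤ c)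
    (hc : c ≤ 1) : |cdfV θ c - cdfV θ' c| ≤ |θ - θ'| / m := by
  have hD := le_cdfV_denom hθ hc
  have hD' := le_cdfV_denom hθ' hc
  have hDD' : 0 < (θ * c + 1 - θ) * (θ' * c + 1 - θ') := by nlinarith
  rw [cdfV, cdfV, div_sub_div _ _ (by nlinarith) (by nlinarith), abs_div, abs_of_pos hDD',
    div_le_div_iff₀ hDD' hm,
    show c * (θ' * c + 1 - θ') - (θ * c + 1 - θ) * c = c * (1 - c) * (θ - θ') by ring,
    abs_mul, abs_of_nonneg (by nlinarith : 0 ≤ c * (1 - c))]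
  have hcm : c * (1 - c) * m ≤ (θ * c + 1 - θ) * (θ' * c + 1 - θ') := by
    nlinarith [mul_le_mul hD hD' (by linarith) (by linarith)]
  nlinarith [mul_le_mul_of_nonneg_left hcm (abs_nonneg (θ - θ'))]

end CdfV

section Split

variable {α : Type*} [Fintype α] [LinearOrder α] {P : α → ℝ} {θ θ' : ℝ}

lemma isPMF_splitV (hP : IsPMF P) (hθ : θ ≤ 1) : IsPMF (splitV P θ) := by
  refine ⟨fun i => ?_, ?_⟩
  · rw [splitV_eq_cdfV_sub, sub_nonneg]
    exact cdfV_mono hθ (cdfLt_nonneg hP i) (cdfLt_le_cdf hP i) (cdf_le_one hP i)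
  · simp only [splitV_eq_cdfV_sub]
    rw [sum_sub_cdf_cdfLt, hP.2, cdfV_one, cdfV_zero, sub_zero]

variable [OrderBot α]

lemma isPMF_splitU (hP : IsPMF P) (hθ : θ ∈ Set.Icc (0 : ℝ) 1) : IsPMF (splitU P θ) := by
  refine ⟨fun i => ?_, ?_⟩
  · have := hP.1 i
    unfold splitU
    split_ifs <;> nlinarith [hθ.1, hθ.2]
  · simp [splitU, Finset.sum_add_distrib, ← Finset.mul_sum, hP.2]

lemma abs_splitU_sub_le (hP : IsPMF P) (i : α) :
    |splitU P θ i - splitU P θ' i| ≤ |θ - θ'| := by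
  rw [show splitU P θ i - splitU P θ' i = (θ - θ') * (P i - if i = ⊥ then 1 else 0) by
    unfold splitU; split_ifs <;> ring, abs_mul]
  refine mul_le_of_le_one_right (abs_nonneg _) (abs_le.2 ?_)
  have := hP.1 i
  have := hP.le_one i
  split_ifs <;> constructor <;> linarith

lemma abs_splitV_sub_le (hP : IsPMF P) (hbot : 0 < P ⊥) (hθ : θ ≤ 1) (hθ' : θ' ≤ 1) (i : α) :
    |splitV P θ i - splitV P θ' i| ≤ 2 * |θ - θ'| / P ⊥ := by
  have hcdf := abs_cdfV_sub_le hθ hθ' hbot (bot_le_cdf hP i) (cdf_le_one hP i)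
  have hcdfLt : |cdfV θ (cdfLt P i) - cdfV θ' (cdfLt P i)| ≤ |θ - θ'| / P ⊥ := by
    rcases eq_or_ne i ⊥ with rfl | hi
    · rw [cdfLt_bot, cdfV_zero, cdfV_zero, sub_zero, abs_zero]
      positivity
    · exact abs_cdfV_sub_le hθ hθ' hbot (bot_le_cdfLt hP hi)
        ((cdfLt_le_cdf hP i).trans (cdf_le_one hP i))
  rw [splitV_eq_cdfV_sub, splitV_eq_cdfV_sub]
  calc _ = |(cdfV θ (cdf P i) - cdfV θ' (cdf P i)) -
          (cdfV θ (cdfLt P i) - cdfV θ' (cdfLt P i))| := by ring_nf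
    _ ≤ _ := abs_sub _ _
    _ ≤ |θ - θ'| / P ⊥ + |θ - θ'| / P ⊥ := add_le_add hcdf hcdfLt
    _ = _ := by ring

lemma sum_abs_splitU_mul_splitV_sub_le (hP : IsPMF P) (hbot : 0 < P ⊥) (hθ : θ ≤ 1)
    (hθ' : θ' ∈ Set.Icc (0 : ℝ) 1) :
    ∑ k : α × α, |splitU P θ k.1 * splitV P θ k.2 - splitU P θ' k.1 * splitV P θ' k.2| ≤
      Fintype.card α * (1 + 2 / P ⊥) * |θ - θ'| :=
  calc _ ≤ ∑ u, |splitU P θ u - splitU P θ' u| + ∑ v, |splitV P θ v - splitV P θ' v| :=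
        (isPMF_splitU hP hθ').sum_abs_mul_sub_mul_le (isPMF_splitV hP hθ)
    _ ≤ ∑ _u : α, |θ - θ'| + ∑ _v : α, 2 * |θ - θ'| / P ⊥ :=
        add_le_add (Finset.sum_le_sum fun u _ => abs_splitU_sub_le hP u)
          (Finset.sum_le_sum fun v _ => abs_splitV_sub_le hP hbot hθ hθ'.2 v)
    _ = _ := by simp only [Finset.sum_const, Finset.card_univ, nsmul_eq_mul]; ring

end Split

end QIT

open QIT in
theorem split_state_continuity_general
    {α A' B E : Type*} [Fintype α] [LinearOrder α] [OrderBot α]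
    [Fintype A'] [DecidableEq A'] [Fintype B] [Fintype E]
    (P : α → ℝ) (hP : IsPMF P) (hfull : ∀ i, 0 < P i)
    (ζ : α → A' → ℂ) (hζ : ∀ a, UnitVec (ζ a))
    (N : Matrix A' A' ℂ → Matrix B B ℂ)
    (V : Matrix (B × E) A' ℂ) (hV : IsStinespring N V) :
    ∃ C : ℝ,
      ∀ δ : ℝ, 0 ≤ δ →
        ∀ θ ∈ Set.Icc (0:ℝ) 1, ∀ θ' ∈ Set.Icc (0:ℝ) 1, |θ - θ'| ≤ δ →
          pureDist
            (fun q : (α × α) × (B × E) =>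
              ((Real.sqrt (splitU P θ q.1.1 * splitV P θ q.1.2) : ℝ) : ℂ) *
                ∑ x, V q.2 x * ζ (max q.1.1 q.1.2) x)
            (fun q : (α × α) × (B × E) =>
              ((Real.sqrt (splitU P θ' q.1.1 * splitV P θ' q.1.2) : ℝ) : ℂ) *
                ∑ x, V q.2 x * ζ (max q.1.1 q.1.2) x)
            ≤ C * Real.sqrt δ := by
  set K : ℝ := Fintype.card α * (1 + 2 / P ⊥)
  have hK : 0 ≤ K := by have := hfull ⊥; positivity
  refine ⟨√K, fun δ _ θ hθ θ' hθ' hθθ' => ?_⟩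
  calc _ ≤ √(∑ k : α × α,
          |splitU P θ k.1 * splitV P θ k.2 - splitU P θ' k.1 * splitV P θ' k.2|) :=
        pureDist_weighted_isometry_le hV.1 (fun k => hζ (max k.1 k.2))
          ((isPMF_splitU hP hθ).mul (isPMF_splitV hP hθ.2))
          ((isPMF_splitU hP hθ').mul (isPMF_splitV hP hθ'.2))
    _ ≤ √(K * δ) := Real.sqrt_le_sqrt <|
        (sum_abs_splitU_mul_splitV_sub_le hP (hfull ⊥) hθ.2 hθ').trans (by gcongr)
    _ = √K * √δ := Real.sqrt_mul hK δ

open QIT in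
/-- Continuity of the split control state in the splitting parameter:
with `|Ω'(θ)⟩ = U_N U_split(θ) |Ω⟩`, there is a constant `C` (depending only on `P_A`)
such that `|θ − θ'| ≤ δ` implies `P(Ω'(θ), Ω'(θ')) ≤ C √δ`. -/
theorem split_state_continuity
    {α A' B E : Type*} [Fintype α] [LinearOrder α] [OrderBot α]
    [Fintype A'] [DecidableEq A'] [Fintype B] [DecidableEq B] [Fintype E] [DecidableEq E]
    (P : α → ℝ) (hP : IsPMF P) (hfull : ∀ i, 0 < P i)
    (ζ : α → A' → ℂ) (hζ : ∀ a, UnitVec (ζ a))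
    (N : Matrix A' A' ℂ → Matrix B B ℂ) (hN : IsCPTP N)
    (V : Matrix (B × E) A' ℂ) (hV : IsStinespring N V) :
    ∃ C : ℝ,
      ∀ δ : ℝ, 0 ≤ δ →
        ∀ θ ∈ Set.Icc (0:ℝ) 1, ∀ θ' ∈ Set.Icc (0:ℝ) 1, |θ - θ'| ≤ δ →
          pureDist
            (fun q : (α × α) × (B × E) =>
              ((Real.sqrt (splitU P θ q.1.1 * splitV P θ q.1.2) : ℝ) : ℂ) *
                ∑ x, V q.2 x * ζ (max q.1.1 q.1.2) x)
            (fun q : (α × α) × (B × E) =>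
              ((Real.sqrt (splitU P θ' q.1.1 * splitV P θ' q.1.2) : ℝ) : ℂ) *
                ∑ x, V q.2 x * ζ (max q.1.1 q.1.2) x)
            ≤ C * Real.sqrt δ :=
  split_state_continuity_general P hP hfull ζ hζ N V hV
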